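/- Suppose λ_{i,1}·λ_{j,2} + η ≠ 0 for all i, j, and suppose R1 and R2 have all diagonal entries equal to 1 (correlation matrices). Then for each pixel (i,j), the diagonal entry at index (j,i) of the predictive covariance matrix R − R·R̃⁻¹·R, where R = R2 ⊗ R1, equals 1 − Σ_{j'=1}^{n2} Σ_{i'=1}^{n1} r̃_{i,i',1}²·r̃_{j,j',2}² / (λ_{i',1}·λ_{j',2} + η), where r̃_{i,i',1} is the (i,i') entry of R1·U1 and r̃_{j,j',2} is the (j,j') entry of R2·U2. -/

import Mathlib

/-!
Write `U := U₂ ⊗ U₁` and `d (j', i') := λ_{j',2} λ_{i',1}`, so that `R := R₂ ⊗ R₁ = U diag(d) Uᵀ`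
with `U` orthogonal. Then `(R + ηI)⁻¹ = U diag(1 / (d + η)) Uᵀ`, and since `R` is symmetric,
`R (R + ηI)⁻¹ R = (RU) diag(1 / (d + η)) (RU)ᵀ`, whose diagonal entries are weighted sums of
squares of entries of `RU = (R₂U₂) ⊗ (R₁U₁)`.
-/

open Matrix
open scoped Kronecker

namespace Matrix

variable {m n K : Type*} [Fintype n] [DecidableEq n]

section CommSemiring

variable [CommSemiring K]

theorem mul_diagonal_mul_transpose_apply_self (A : Matrix m n K) (c : n → K) (x : m) :
    (A * diagonal c * Aᵀ) x x = ∑ k, A x k ^ 2 * c k := by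
  rw [mul_apply]
  exact Finset.sum_congr rfl fun k _ => by rw [mul_diagonal, transpose_apply]; ring

theorem kronecker_conj_diagonal [Fintype m] [DecidableEq m] (U : Matrix m m K)
    (V : Matrix n n K) (a : m → K) (b : n → K) :
    (U * diagonal a * Uᵀ) ⊗ₖ (V * diagonal b * Vᵀ)
      = (U ⊗ₖ V) * diagonal (fun p => a p.1 * b p.2) * (U ⊗ₖ V)ᵀ := by
  rw [mul_kronecker_mul, mul_kronecker_mul, diagonal_kronecker_diagonal, kroneckerMap_transpose]

theorem transpose_mul_self_kronecker [Fintype m] [DecidableEq m] {U : Matrix m m K}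
    {V : Matrix n n K} (hU : Uᵀ * U = 1) (hV : Vᵀ * V = 1) : (U ⊗ₖ V)ᵀ * (U ⊗ₖ V) = 1 := by
  rw [← kroneckerMap_transpose, ← mul_kronecker_mul, hU, hV, one_kronecker_one]

end CommSemiring

section Field

variable [Field K] {U : Matrix n n K}

theorem conj_diagonal_mul_conj_diagonal (hU : Uᵀ * U = 1) (a b : n → K) :
    U * diagonal a * Uᵀ * (U * diagonal b * Uᵀ) = U * diagonal (a * b) * Uᵀ := by
  calc U * diagonal a * Uᵀ * (U * diagonal b * Uᵀ)
      = U * (diagonal a * (Uᵀ * U) * diagonal b) * Uᵀ := by simp only [Matrix.mul_assoc]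
    _ = U * diagonal (a * b) * Uᵀ := by
      rw [hU, Matrix.mul_one, diagonal_mul_diagonal]; rfl

theorem conj_diagonal_add_smul_one (hU : Uᵀ * U = 1) (d : n → K) (η : K) :
    U * diagonal d * Uᵀ + η • (1 : Matrix n n K) = U * diagonal (fun k => d k + η) * Uᵀ := by
  have hdiag : diagonal (fun k => d k + η) = diagonal d + η • 1 := by
    rw [smul_one_eq_diagonal, diagonal_add]
  rw [hdiag, Matrix.mul_add, Matrix.add_mul, Matrix.mul_smul, Matrix.smul_mul, Matrix.mul_one,
    mul_eq_one_comm.mp hU]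

theorem inv_conj_diagonal (hU : Uᵀ * U = 1) {e : n → K} (he : ∀ k, e k ≠ 0) :
    (U * diagonal e * Uᵀ)⁻¹ = U * diagonal e⁻¹ * Uᵀ := by
  refine inv_eq_right_inv ?_
  have he' : e * e⁻¹ = fun _ => 1 := funext fun k => mul_inv_cancel₀ (he k)
  rw [conj_diagonal_mul_conj_diagonal hU, he', diagonal_one, Matrix.mul_one,
    mul_eq_one_comm.mp hU]

theorem conj_diagonal_mul_inv_add_smul_one_mul_apply_self (hU : Uᵀ * U = 1) {M : Matrix n n K}
    {d : n → K} (hM : M = U * diagonal d * Uᵀ) {η : K} (hd : ∀ k, d k + η ≠ 0) (x : n) :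
    (M * (M + η • (1 : Matrix n n K))⁻¹ * M) x x = ∑ k, (M * U) x k ^ 2 / (d k + η) := by
  have hinv : (M + η • (1 : Matrix n n K))⁻¹ = U * diagonal (fun k => (d k + η)⁻¹) * Uᵀ := by
    rw [hM, conj_diagonal_add_smul_one hU, inv_conj_diagonal hU hd]; rfl
  have hsymm : Mᵀ = M := by
    rw [hM, transpose_mul, transpose_mul, transpose_transpose, diagonal_transpose,
      Matrix.mul_assoc]
  have hsandwich : M * (M + η • (1 : Matrix n n K))⁻¹ * M
      = M * U * diagonal (fun k => (d k + η)⁻¹) * (M * U)ᵀ := by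
    rw [hinv, transpose_mul, hsymm]; simp only [Matrix.mul_assoc]
  simp only [hsandwich, mul_diagonal_mul_transpose_apply_self, div_eq_mul_inv]

end Field

end Matrix

theorem stmt14_general (n1 n2 : ℕ)
    (R1 U1 : Matrix (Fin n1) (Fin n1) ℝ) (R2 U2 : Matrix (Fin n2) (Fin n2) ℝ)
    (lam1 : Fin n1 → ℝ) (lam2 : Fin n2 → ℝ)
    (hU1' : U1ᵀ * U1 = 1)
    (hU2' : U2ᵀ * U2 = 1)
    (hR1 : R1 = U1 * Matrix.diagonal lam1 * U1ᵀ)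
    (hR2 : R2 = U2 * Matrix.diagonal lam2 * U2ᵀ)
    (η : ℝ)
    (hnz : ∀ (i : Fin n1) (j : Fin n2), lam1 i * lam2 j + η ≠ 0)
    (hd1 : ∀ i : Fin n1, R1 i i = 1) (hd2 : ∀ j : Fin n2, R2 j j = 1)
    (i : Fin n1) (j : Fin n2) :
    (R2 ⊗ₖ R1 -
        (R2 ⊗ₖ R1) *
          (R2 ⊗ₖ R1 + η • (1 : Matrix (Fin n2 × Fin n1) (Fin n2 × Fin n1) ℝ))⁻¹ *
          (R2 ⊗ₖ R1)) (j, i) (j, i)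
      = 1 - ∑ j' : Fin n2, ∑ i' : Fin n1,
          ((R1 * U1) i i') ^ 2 * ((R2 * U2) j j') ^ 2 / (lam1 i' * lam2 j' + η) := by
  have hR : R2 ⊗ₖ R1 = (U2 ⊗ₖ U1) * diagonal (fun p => lam2 p.1 * lam1 p.2) * (U2 ⊗ₖ U1)ᵀ := by
    rw [hR1, hR2, kronecker_conj_diagonal]
  have hd : ∀ p : Fin n2 × Fin n1, lam2 p.1 * lam1 p.2 + η ≠ 0 := fun p => by
    rw [mul_comm]; exact hnz p.2 p.1
  rw [Matrix.sub_apply, conj_diagonal_mul_inv_add_smul_one_mul_apply_self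
    (transpose_mul_self_kronecker hU2' hU1') hR hd, kroneckerMap_apply, hd1, hd2, one_mul,
    ← mul_kronecker_mul, Fintype.sum_prod_type]
  refine congrArg _ (Finset.sum_congr rfl fun j' _ => Finset.sum_congr rfl fun i' _ => ?_)
  rw [kroneckerMap_apply]
  ring

theorem stmt14 (n1 n2 : ℕ) (hn1 : 0 < n1) (hn2 : 0 < n2)
    (R1 U1 : Matrix (Fin n1) (Fin n1) ℝ) (R2 U2 : Matrix (Fin n2) (Fin n2) ℝ)
    (lam1 : Fin n1 → ℝ) (lam2 : Fin n2 → ℝ)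
    (hR1sym : R1.IsSymm) (hR2sym : R2.IsSymm)
    (hU1 : U1 * U1ᵀ = 1) (hU1' : U1ᵀ * U1 = 1)
    (hU2 : U2 * U2ᵀ = 1) (hU2' : U2ᵀ * U2 = 1)
    (hR1 : R1 = U1 * Matrix.diagonal lam1 * U1ᵀ)
    (hR2 : R2 = U2 * Matrix.diagonal lam2 * U2ᵀ)
    (η : ℝ)
    (hnz : ∀ (i : Fin n1) (j : Fin n2), lam1 i * lam2 j + η ≠ 0)
    (hd1 : ∀ i : Fin n1, R1 i i = 1) (hd2 : ∀ j : Fin n2, R2 j j = 1)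
    (i : Fin n1) (j : Fin n2) :
    (R2 ⊗ₖ R1 -
        (R2 ⊗ₖ R1) *
          (R2 ⊗ₖ R1 + η • (1 : Matrix (Fin n2 × Fin n1) (Fin n2 × Fin n1) ℝ))⁻¹ *
          (R2 ⊗ₖ R1)) (j, i) (j, i)
      = 1 - ∑ j' : Fin n2, ∑ i' : Fin n1,
          ((R1 * U1) i i') ^ 2 * ((R2 * U2) j j') ^ 2 / (lam1 i' * lam2 j' + η) :=
  stmt14_general n1 n2 R1 U1 R2 U2 lam1 lam2 hU1' hU2' hR1 hR2 η hnz hd1 hd2 i j
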